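/- arXiv:1303.2304 — 3 statements merged into one kernel-verified Lean document; each statement's English description precedes it below -/
import Mathlib

section
/- Let C be a cycle graph drawn with vertices on a circle, and let e₁, e₂, e₃ be three chords (edges joining distinct non-adjacent vertices of the cycle) whose endpoint pairs pairwise interleave around the cycle, with all six endpoints distinct. Then the graph obtained from C by adding e₁, e₂, e₃ contains a subdivision of K_{3,3}. -/
/-! Sort the chords by their left endpoints. Interleaving then forces the six endpoints into
the order `a₀ < a₁ < a₂ < b₀ < b₁ < b₂` around the cycle, so each chord joins opposite corners
of the hexagon spanned by the endpoints. A hexagon with its three long diagonals is `K₃,₃`,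
bipartitioned by parity around the hexagon: the branch vertices are `a₀, a₂, b₁` and
`a₁, b₀, b₂`, and the nine paths are the six cycle arcs between consecutive endpoints and the
three chords. -/

open SimpleGraph

/-- A subdivision of `H` inside `G`: injective branch vertices together with
paths realizing the edges of `H`, pairwise internally disjoint and internally
avoiding all branch vertices. -/
structure Subdiv {α β : Type*} (H : SimpleGraph α) (G : SimpleGraph β) where
  f : α → β
  inj : Function.Injective f
  path : ∀ ⦃u v⦄, H.Adj u v → G.Walk (f u) (f v)
  isPath : ∀ ⦃u v⦄ (h : H.Adj u v), (path h).IsPath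
  rev : ∀ ⦃u v⦄ (h : H.Adj u v), path h.symm = (path h).reverse
  disj : ∀ ⦃u v u' v'⦄ (h : H.Adj u v) (h' : H.Adj u' v'), s(u, v) ≠ s(u', v') →
    ∀ x, x ∈ (path h).support → x ∈ (path h').support →
      (x = f u ∨ x = f v) ∧ (x = f u' ∨ x = f v')
  branch : ∀ ⦃u v⦄ (h : H.Adj u v) (w : α), f w ∈ (path h).support → w = u ∨ w = v

open scoped Fin.NatCast Fin.CommRing

namespace Subdiv

variable {ι κ β : Type*} {G : SimpleGraph β} (f : ι ⊕ κ → β)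
  (P : ∀ i j, G.Walk (f (.inl i)) (f (.inr j)))

def bipartitePath :
    ∀ ⦃u v⦄, (completeBipartiteGraph ι κ).Adj u v → G.Walk (f u) (f v)
  | .inl i, .inr j, _ => P i j
  | .inr j, .inl i, _ => (P i j).reverse
  | .inl _, .inl _, h => absurd h (by simp)
  | .inr _, .inr _, h => absurd h (by simp)

@[simp]
theorem bipartitePath_inl_inr {i : ι} {j : κ}
    (h : (completeBipartiteGraph ι κ).Adj (.inl i) (.inr j)) :
    bipartitePath f P h = P i j := rfl

@[simp]
theorem bipartitePath_inr_inl {i : ι} {j : κ}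
    (h : (completeBipartiteGraph ι κ).Adj (.inr j) (.inl i)) :
    bipartitePath f P h = (P i j).reverse := rfl

variable {f P}

theorem eq_inl_or_eq_inr_of_mem_support (hinj : Function.Injective f)
    (hdisj : ∀ i j i' j', (i, j) ≠ (i', j') → ∀ x ∈ (P i j).support, x ∈ (P i' j').support →
      (x = f (.inl i) ∨ x = f (.inr j)) ∧ (x = f (.inl i') ∨ x = f (.inr j')))
    {i : ι} {j : κ} {w : ι ⊕ κ} (hw : f w ∈ (P i j).support) : w = .inl i ∨ w = .inr j := by
  rcases w with i' | j'
  · by_contra hne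
    have hi : i' ≠ i := fun h => hne (.inl (h ▸ rfl))
    rcases (hdisj i' j i j (by simp [hi]) _ (P i' j).start_mem_support hw).2 with h | h <;>
      simp_all [hinj.eq_iff]
  · by_contra hne
    have hj : j' ≠ j := fun h => hne (.inr (h ▸ rfl))
    rcases (hdisj i j' i j (by simp [hj]) _ (P i j').end_mem_support hw).2 with h | h <;>
      simp_all [hinj.eq_iff]

def ofCompleteBipartite (hinj : Function.Injective f) (hpath : ∀ i j, (P i j).IsPath)
    (hdisj : ∀ i j i' j', (i, j) ≠ (i', j') → ∀ x ∈ (P i j).support, x ∈ (P i' j').support →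
      (x = f (.inl i) ∨ x = f (.inr j)) ∧ (x = f (.inl i') ∨ x = f (.inr j'))) :
    Subdiv (completeBipartiteGraph ι κ) G where
  f := f
  inj := hinj
  path := bipartitePath f P
  isPath
    | .inl i, .inr j, _ => hpath i j
    | .inr j, .inl i, _ => (hpath i j).reverse
    | .inl _, .inl _, h | .inr _, .inr _, h => absurd h (by simp)
  rev
    | .inl _, .inr _, _ => rfl
    | .inr _, .inl _, _ => (Walk.reverse_reverse _).symm
    | .inl _, .inl _, h | .inr _, .inr _, h => absurd h (by simp)
  disj u v u' v' h h' hne x hx hx' := by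
    cases u <;> cases v <;> cases u' <;> cases v' <;> simp at h h' <;>
    simp only [bipartitePath_inl_inr, bipartitePath_inr_inl, Walk.support_reverse,
      List.mem_reverse] at hx hx' <;>
    have := hdisj _ _ _ _ (by contrapose! hne; simp_all) x hx hx' <;>
    tauto
  branch
    | .inl _, .inr _, _, _, hw => eq_inl_or_eq_inr_of_mem_support hinj hdisj hw
    | .inr _, .inl _, _, _, hw => (eq_inl_or_eq_inr_of_mem_support hinj hdisj
        (List.mem_reverse.1 (Walk.support_reverse _ ▸ hw))).symm
    | .inl _, .inl _, h, _, _ | .inr _, .inr _, h, _, _ => absurd h (by simp)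

end Subdiv

namespace SimpleGraph.cycleGraph

variable {n : ℕ}

def walkForward (x : Fin (n + 2)) :
    (k : ℕ) → (cycleGraph (n + 2)).Walk x (x + (k : Fin (n + 2)))
  | 0 => Walk.nil.copy rfl (by simp)
  | k + 1 => ((walkForward x k).concat (cycleGraph_adj.2 (Or.inr (add_sub_cancel_left _ 1)))).copy
      rfl (by push_cast; ring)

theorem support_walkForward (x : Fin (n + 2)) (k : ℕ) :
    (walkForward x k).support = (List.range (k + 1)).map fun i : ℕ => x + (i : Fin (n + 2)) := by
  induction k with
  | zero => simp [walkForward]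
  | succ k ih =>
    rw [walkForward, Walk.support_copy, Walk.support_concat, ih, List.range_succ (n := k + 1),
      List.map_append]
    simp [add_assoc]

theorem mem_support_walkForward {x y : Fin (n + 2)} {k : ℕ} (hk : k < n + 2) :
    y ∈ (walkForward x k).support ↔ (y - x).val ≤ k := by
  simp only [support_walkForward, List.mem_map, List.mem_range, Nat.lt_succ_iff]
  constructor
  · rintro ⟨i, hi, rfl⟩
    rw [add_sub_cancel_left, Fin.val_cast_of_lt (hi.trans_lt hk)]
    exact hi
  · exact fun h => ⟨(y - x).val, h, by simp⟩

theorem isPath_walkForward (x : Fin (n + 2)) {k : ℕ} (hk : k < n + 2) :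
    (walkForward x k).IsPath := by
  rw [Walk.isPath_def, support_walkForward]
  refine List.nodup_range.map_on fun i hi j hj hij => ?_
  simp only [List.mem_range] at hi hj
  have := congrArg Fin.val (add_left_cancel hij)
  rwa [Fin.val_cast_of_lt (by omega), Fin.val_cast_of_lt (by omega)] at this

def arc (u v : Fin (n + 2)) : (cycleGraph (n + 2)).Walk u v :=
  (walkForward u (v - u).val).copy rfl (by simp)

theorem isPath_arc (u v : Fin (n + 2)) : (arc u v).IsPath := by
  rw [arc, Walk.isPath_copy]
  exact isPath_walkForward u (v - u).isLt

theorem mem_support_arc {u v y : Fin (n + 2)} :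
    y ∈ (arc u v).support ↔ (y - u).val ≤ (v - u).val := by
  rw [arc, Walk.support_copy, mem_support_walkForward (v - u).isLt]

theorem mem_support_arc_of_le {u v y : Fin (n + 2)} (huv : u ≤ v) :
    y ∈ (arc u v).support ↔ u ≤ y ∧ y ≤ v := by
  rw [mem_support_arc, Fin.sub_val_of_le huv]
  rcases le_or_gt u y with huy | hyu
  · rw [Fin.sub_val_of_le huy]; omega
  · rw [Fin.coe_sub_iff_lt.2 hyu]; omega

theorem mem_support_arc_of_lt {u v y : Fin (n + 2)} (hvu : v < u) :
    y ∈ (arc u v).support ↔ u ≤ y ∨ y ≤ v := by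
  rw [mem_support_arc, Fin.coe_sub_iff_lt.2 hvu]
  rcases le_or_gt u y with huy | hyu
  · rw [Fin.sub_val_of_le huy]; omega
  · rw [Fin.coe_sub_iff_lt.2 hyu]; omega

end SimpleGraph.cycleGraph

structure CrossingChords (n : ℕ) (G : SimpleGraph (Fin (n + 2))) where
  cycleGraph_le : cycleGraph (n + 2) ≤ G
  p0 : Fin (n + 2)
  p1 : Fin (n + 2)
  p2 : Fin (n + 2)
  p3 : Fin (n + 2)
  p4 : Fin (n + 2)
  p5 : Fin (n + 2)
  p0_lt_p1 : p0 < p1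
  p1_lt_p2 : p1 < p2
  p2_lt_p3 : p2 < p3
  p3_lt_p4 : p3 < p4
  p4_lt_p5 : p4 < p5
  adj_p0_p3 : G.Adj p0 p3
  adj_p1_p4 : G.Adj p1 p4
  adj_p2_p5 : G.Adj p2 p5

namespace CrossingChords

variable {n : ℕ} {G : SimpleGraph (Fin (n + 2))} (C : CrossingChords n G)

def branch : Fin 3 ⊕ Fin 3 → Fin (n + 2) :=
  Sum.elim ![C.p0, C.p2, C.p4] ![C.p1, C.p3, C.p5]

def arc (u v : Fin (n + 2)) : G.Walk u v :=
  (cycleGraph.arc u v).mapLe C.cycleGraph_le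

theorem isPath_arc (u v : Fin (n + 2)) : (C.arc u v).IsPath :=
  (cycleGraph.isPath_arc u v).mapLe _

theorem mem_support_arc_of_le {u v y : Fin (n + 2)} (huv : u ≤ v) :
    y ∈ (C.arc u v).support ↔ u ≤ y ∧ y ≤ v := by
  rw [arc, Walk.support_mapLe_eq_support, cycleGraph.mem_support_arc_of_le huv]

theorem mem_support_arc_of_lt {u v y : Fin (n + 2)} (hvu : v < u) :
    y ∈ (C.arc u v).support ↔ u ≤ y ∨ y ≤ v := by
  rw [arc, Walk.support_mapLe_eq_support, cycleGraph.mem_support_arc_of_lt hvu]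

def path : ∀ i j, G.Walk (C.branch (.inl i)) (C.branch (.inr j))
  | 0, 0 => C.arc C.p0 C.p1
  | 0, 1 => C.adj_p0_p3.toWalk
  | 0, 2 => (C.arc C.p5 C.p0).reverse
  | 1, 0 => (C.arc C.p1 C.p2).reverse
  | 1, 1 => C.arc C.p2 C.p3
  | 1, 2 => C.adj_p2_p5.toWalk
  | 2, 0 => C.adj_p1_p4.toWalk.reverse
  | 2, 1 => (C.arc C.p3 C.p4).reverse
  | 2, 2 => C.arc C.p4 C.p5

theorem branch_injective : Function.Injective C.branch := by
  have := C.p0_lt_p1; have := C.p1_lt_p2; have := C.p2_lt_p3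
  have := C.p3_lt_p4; have := C.p4_lt_p5
  rintro (i | i) (j | j) h <;> fin_cases i <;> fin_cases j <;>
    simp [branch, Fin.ext_iff] at h ⊢ <;> omega

theorem isPath_path (i j : Fin 3) : (C.path i j).IsPath := by
  fin_cases i <;> fin_cases j
  exacts [C.isPath_arc _ _, C.adj_p0_p3.isPath_toWalk, (C.isPath_arc _ _).reverse,
    (C.isPath_arc _ _).reverse, C.isPath_arc _ _, C.adj_p2_p5.isPath_toWalk,
    C.adj_p1_p4.isPath_toWalk.reverse, (C.isPath_arc _ _).reverse, C.isPath_arc _ _]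

theorem eq_endpoint_of_mem_support_path (i j i' j' : Fin 3) (hne : (i, j) ≠ (i', j'))
    (x : Fin (n + 2))
    (hx : x ∈ (C.path i j).support) (hx' : x ∈ (C.path i' j').support) :
    (x = C.branch (.inl i) ∨ x = C.branch (.inr j)) ∧
      (x = C.branch (.inl i') ∨ x = C.branch (.inr j')) := by
  have h01 := C.p0_lt_p1; have h12 := C.p1_lt_p2; have h23 := C.p2_lt_p3
  have h34 := C.p3_lt_p4; have h45 := C.p4_lt_p5
  fin_cases i <;> fin_cases j <;> fin_cases i' <;> fin_cases j' <;>
    simp_all [path, branch, mem_support_arc_of_le,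
      C.mem_support_arc_of_lt (h01.trans (h12.trans (h23.trans (h34.trans h45)))),
      le_of_lt, Fin.ext_iff] <;> omega

def subdiv : Subdiv (completeBipartiteGraph (Fin 3) (Fin 3)) G :=
  .ofCompleteBipartite C.branch_injective C.isPath_path C.eq_endpoint_of_mem_support_path

end CrossingChords

theorem cycle_three_interleaving_chords_k33_general {n : ℕ} (a b : Fin 3 → Fin n)
    (hinterleave : ∀ i j, i ≠ j →
      (a i < a j ∧ a j < b i ∧ b i < b j) ∨ (a j < a i ∧ a i < b j ∧ b j < b i)) :
    Nonempty (Subdiv (completeBipartiteGraph (Fin 3) (Fin 3))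
      (cycleGraph n ⊔ SimpleGraph.fromEdgeSet {e | ∃ i, e = s(a i, b i)})) := by
  have hcross : ∀ i j, a i < a j → a j < b i ∧ b i < b j := fun i j h => by
    rcases hinterleave i j (by rintro rfl; exact h.false) with h' | h'
    exacts [h'.2, absurd h'.1 h.asymm]
  have ha : Function.Injective a := fun i j h => by
    by_contra hij
    rcases hinterleave i j hij with h' | h' <;> simp [h] at h'
  set σ := Tuple.sort a
  have hsort : StrictMono (a ∘ σ) :=
    (Tuple.monotone_sort a).strictMono_of_injective (ha.comp σ.injective)
  have h01 := hsort (show (0 : Fin 3) < 1 by decide)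
  have h12 := hsort (show (1 : Fin 3) < 2 by decide)
  obtain ⟨h13, h34⟩ := hcross _ _ h01
  obtain ⟨h23, -⟩ := hcross _ _ (h01.trans h12)
  obtain ⟨-, h45⟩ := hcross _ _ h12
  obtain ⟨m, rfl⟩ : ∃ m, n = m + 2 := ⟨n - 2, by simp only [Function.comp_apply] at h01; omega⟩
  have hchord : ∀ k, a k < b k →
      (cycleGraph (m + 2) ⊔ fromEdgeSet {e | ∃ i, e = s(a i, b i)}).Adj (a k) (b k) :=
    fun k hk => Or.inr ⟨⟨k, rfl⟩, hk.ne⟩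
  exact ⟨CrossingChords.subdiv ⟨le_sup_left, _, _, _, _, _, _, h01, h12, h23, h34, h45,
    hchord _ (h13.trans' h01), hchord _ (h34.trans' h13), hchord _ (h45.trans' (h34.trans' h23))⟩⟩

/-- if three chords of a cycle graph (edges joining distinct non-adjacent
cycle vertices, all six endpoints distinct) pairwise interleave around the cycle, then
the cycle together with the three chords contains a subdivision of `K_{3,3}`.
Writing each chord as `{a i, b i}` with `a i < b i`, two chords `{a,b}` and `{c,d}`
interleave in the cyclic order iff `a < c < b < d` or `c < a < d < b`. -/
theorem cycle_three_interleaving_chords_k33 {n : ℕ} (a b : Fin 3 → Fin n)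
    (hab : ∀ i, a i < b i)
    (hnadj : ∀ i, ¬ (cycleGraph n).Adj (a i) (b i))
    (hdistinct : ∀ i j, i ≠ j → a i ≠ a j ∧ a i ≠ b j ∧ b i ≠ a j ∧ b i ≠ b j)
    (hinterleave : ∀ i j, i ≠ j →
      (a i < a j ∧ a j < b i ∧ b i < b j) ∨ (a j < a i ∧ a i < b j ∧ b j < b i)) :
    Nonempty (Subdiv (completeBipartiteGraph (Fin 3) (Fin 3))
      (cycleGraph n ⊔ SimpleGraph.fromEdgeSet {e | ∃ i, e = s(a i, b i)})) :=
  cycle_three_interleaving_chords_k33_general a b hinterleave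
end

section
/- Let G be a connected graph with a spanning tree T such that every component of G − E(T) has an even number of edges except possibly one component with one edge of odd parity matching β(G) mod 2 (i.e., ξ(G,T) ≤ 1). If G' is obtained from G by attaching a copy of H₃ at three distinct vertices of G, then G' has a spanning tree T' with ξ(G',T') = ξ(G,T). -/
/-! Take `T'` to be `T` together with the three free edges and the two edges joining vertex `2`
of the size-3 part of `K_{2,3}` to both vertices `0`, `1` of its size-2 part.  Every new vertex
enters as a leaf, so `T'` is a spanning tree.  The co-tree graph of `T'` is the disjoint union of
the co-tree graph of `T` with the 4-cycle `0-3-1-4` (and the isolated vertex `2`); that cycle has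
an even number of edges, so the components with an odd number of edges are the same on both
sides. -/

open SimpleGraph

/-- The Xuong deficiency of a spanning tree `T` of `H`: the number of connected
components of the co-tree graph `H \ T` containing an odd number of edges. -/
noncomputable def xi {V : Type*} (H T : SimpleGraph V) : ℕ :=
  Nat.card {c : (H \ T).ConnectedComponent //
    Odd (Nat.card {e : Sym2 V // e ∈ (H \ T).edgeSet ∧
      ∀ v ∈ e, (H \ T).connectedComponentMk v = c})}

/-- The graph obtained from `G` by attaching a copy of `H₃`, identifying its three
free nodes with the vertices `x`, `y`, `z` of `G`.  The five new vertices are the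
two vertices `0`, `1` of the size-2 part of `K_{2,3}` and the three vertices
`2`, `3`, `4` of the size-3 part; the free edges join `2,3,4` to `x,y,z`. -/
def attachH₃ {V : Type*} (G : SimpleGraph V) (x y z : V) : SimpleGraph (V ⊕ Fin 5) :=
  G.map Function.Embedding.inl ⊔ SimpleGraph.fromEdgeSet
    {s(Sum.inr 0, Sum.inr 2), s(Sum.inr 0, Sum.inr 3), s(Sum.inr 0, Sum.inr 4),
     s(Sum.inr 1, Sum.inr 2), s(Sum.inr 1, Sum.inr 3), s(Sum.inr 1, Sum.inr 4),
     s(Sum.inr 2, Sum.inl x), s(Sum.inr 3, Sum.inl y), s(Sum.inr 4, Sum.inl z)}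

namespace SimpleGraph

variable {V W : Type*} {G : SimpleGraph V} {H : SimpleGraph W}

lemma IsAcyclic.map (f : V ↪ W) (hG : G.IsAcyclic) : (G.map f).IsAcyclic := by
  intro a c hc
  have hrange : ∀ v ∈ c.support, v ∈ Set.range f := by
    intro v hv
    obtain ⟨e, he, hve⟩ := (Walk.mem_support_iff_exists_mem_edges_of_not_nil hc.not_nil).1 hv
    induction e using Sym2.ind with
    | _ u w =>
      obtain ⟨u', w', -, rfl, rfl⟩ := (map_adj f G _ _).1 (c.adj_of_mem_edges he)
      rcases Sym2.mem_iff.1 hve with rfl | rfl <;> exact Set.mem_range_self _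
  have hind : ((G.map f).induce (Set.range f)).IsAcyclic :=
    (Embedding.map f G).isoInduceRange.isAcyclic_iff.1 hG
  refine hind (c.induce _ hrange) ?_
  rw [← Walk.isCycle_map_iff_of_injective (f := (Embedding.induce (Set.range f)).toHom)
    Subtype.val_injective, Walk.map_induce]
  exact hc

lemma not_reachable_of_forall_not_adj {u v : V} (hu : ∀ w, ¬G.Adj u w) (huv : u ≠ v) :
    ¬G.Reachable u v := by
  rintro ⟨p⟩
  cases p with
  | nil => exact huv rfl
  | cons h _ => exact hu _ h

lemma Reachable.apply_eq_of_forall_adj {α : Sort*} {f : V → α}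
    (hf : ∀ u v, G.Adj u v → f u = f v) {u v : V} (h : G.Reachable u v) : f u = f v := by
  obtain ⟨p⟩ := h
  induction p with
  | nil => rfl
  | cons h _ ih => exact (hf _ _ h).trans ih

namespace ConnectedComponent

def edgeSet (c : G.ConnectedComponent) : Set (Sym2 V) :=
  {e | e ∈ G.edgeSet ∧ ∀ v ∈ e, G.connectedComponentMk v = c}

@[simp] lemma mk_mem_edgeSet {c : G.ConnectedComponent} {u v : V} :
    s(u, v) ∈ c.edgeSet ↔
      G.Adj u v ∧ G.connectedComponentMk u = c ∧ G.connectedComponentMk v = c := by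
  simp [edgeSet]

def sumEquiv : (G ⊕g H).ConnectedComponent ≃ G.ConnectedComponent ⊕ H.ConnectedComponent where
  toFun := ConnectedComponent.lift (Sum.map G.connectedComponentMk H.connectedComponentMk)
    fun _ _ p _ => Reachable.apply_eq_of_forall_adj (by
      rintro (u | u) (v | v) h <;> simp_all [Adj.reachable]) p.reachable
  invFun := Sum.elim (map Embedding.sumInl.toHom) (map Embedding.sumInr.toHom)
  left_inv c := by
    induction c using ConnectedComponent.ind with
    | h v => cases v <;> rfl
  right_inv s := by
    rcases s with c | c <;> induction c using ConnectedComponent.ind <;> rfl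

@[simp] lemma sumEquiv_mk (v : V ⊕ W) :
    sumEquiv ((G ⊕g H).connectedComponentMk v) =
      Sum.map G.connectedComponentMk H.connectedComponentMk v := rfl

lemma card_edgeSet_sumEquiv_symm (s : G.ConnectedComponent ⊕ H.ConnectedComponent) :
    Nat.card (sumEquiv.symm s : (G ⊕g H).ConnectedComponent).edgeSet =
      Sum.elim (Nat.card ·.edgeSet) (Nat.card ·.edgeSet) s := by
  rcases s with c | c <;>
  · refine (Nat.card_preimage_of_injective (Sym2.map.injective
      (by first | exact Sum.inl_injective | exact Sum.inr_injective)) ?_).symm.trans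
      (Nat.card_congr (Equiv.setCongr ?_))
    · intro e he
      induction e using Sym2.ind with
      | _ a b =>
        rcases a with a | a <;> rcases b with b | b <;> simp [Equiv.eq_symm_apply] at he
        exact ⟨s(a, b), rfl⟩
    · ext e
      induction e using Sym2.ind with
      | _ u v => simp [Equiv.eq_symm_apply]

end ConnectedComponent

def oddEdgeComponents (G : SimpleGraph V) : Set G.ConnectedComponent :=
  {c | Odd (Nat.card c.edgeSet)}

lemma mem_oddEdgeComponents {c : G.ConnectedComponent} :
    c ∈ G.oddEdgeComponents ↔ Odd (Nat.card c.edgeSet) := Iff.rfl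

def oddEdgeComponentsSumEquiv :
    (G ⊕g H).oddEdgeComponents ≃ G.oddEdgeComponents ⊕ H.oddEdgeComponents :=
  (Equiv.subtypeEquiv (q := Sum.elim (· ∈ G.oddEdgeComponents) (· ∈ H.oddEdgeComponents))
    ConnectedComponent.sumEquiv fun c => by
      rw [← ConnectedComponent.sumEquiv.symm_apply_apply c]
      rcases ConnectedComponent.sumEquiv c with d | d <;>
      simp only [mem_oddEdgeComponents, Equiv.apply_symm_apply, Sum.elim_inl, Sum.elim_inr,
        ConnectedComponent.card_edgeSet_sumEquiv_symm]).trans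
    Equiv.subtypeSum

lemma oddEdgeComponents_eq_empty_of_reachable (v : V)
    (hv : ∀ e ∈ G.edgeSet, ∀ w ∈ e, G.Reachable w v) (heven : Even (Nat.card G.edgeSet)) :
    G.oddEdgeComponents = ∅ := by
  refine Set.eq_empty_of_forall_notMem fun c hc => ?_
  by_cases hcv : c = G.connectedComponentMk v
  · have : c.edgeSet = G.edgeSet := by
      refine Set.Subset.antisymm (fun e he => he.1) fun e he => ⟨he, fun w hw => ?_⟩
      rw [hcv]
      exact ConnectedComponent.sound (hv e he w hw)
    exact Nat.not_even_iff_odd.2 (this ▸ hc) heven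
  · have : c.edgeSet = ∅ := by
      refine Set.eq_empty_of_forall_notMem fun e ⟨he, hec⟩ => hcv ?_
      exact (hec _ e.out_fst_mem).symm.trans (ConnectedComponent.sound (hv e he _ e.out_fst_mem))
    simp [oddEdgeComponents, this] at hc

end SimpleGraph

lemma xi_eq_card_oddEdgeComponents {V : Type*} (H T : SimpleGraph V) :
    xi H T = Nat.card (H \ T).oddEdgeComponents := rfl

section AttachH₃

variable {V : Type*}

def attachH₃Tree (T : SimpleGraph V) (x y z : V) : SimpleGraph (V ⊕ Fin 5) :=
  T.map Function.Embedding.inl ⊔ edge (.inr 2) (.inl x) ⊔ edge (.inr 3) (.inl y) ⊔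
    edge (.inr 4) (.inl z) ⊔ edge (.inr 0) (.inr 2) ⊔ edge (.inr 1) (.inr 2)

lemma attachH₃Tree_le {G T : SimpleGraph V} (hle : T ≤ G) (x y z : V) :
    attachH₃Tree T x y z ≤ attachH₃ G x y z := by
  refine sup_le (sup_le (sup_le (sup_le (sup_le ?_ ?_) ?_) ?_) ?_) ?_
  · exact (map_monotone _ hle).trans le_sup_left
  all_goals
    rw [edge_le_iff]
    right
    simp [attachH₃]

lemma isAcyclic_attachH₃Tree {T : SimpleGraph V} (hT : T.IsAcyclic) (x y z : V) :
    (attachH₃Tree T x y z).IsAcyclic := by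
  refine (((((hT.map _).sup_edge_of_not_reachable ?_).sup_edge_of_not_reachable ?_
    ).sup_edge_of_not_reachable ?_).sup_edge_of_not_reachable ?_).sup_edge_of_not_reachable ?_
  all_goals exact not_reachable_of_forall_not_adj (by simp [edge_adj]) (by simp)

lemma connected_attachH₃Tree {T : SimpleGraph V} (hT : T.Connected) (x y z : V) :
    (attachH₃Tree T x y z).Connected := by
  have hinl : ∀ u, (attachH₃Tree T x y z).Reachable (.inl u) (.inl x) := fun u =>
    (hT.preconnected u x).map ((Hom.ofLE fun a b h => by simp [attachH₃Tree, h]).comp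
      (Embedding.map Function.Embedding.inl T).toHom)
  have h2 : (attachH₃Tree T x y z).Reachable (.inr 2) (.inl x) :=
    Adj.reachable (by simp [attachH₃Tree, edge_adj])
  have hx : ∀ a, (attachH₃Tree T x y z).Reachable a (.inl x) := by
    rintro (u | i)
    · exact hinl u
    fin_cases i
    · exact (Adj.reachable (by simp [attachH₃Tree, edge_adj])).trans h2
    · exact (Adj.reachable (by simp [attachH₃Tree, edge_adj])).trans h2
    · exact h2
    · exact (Adj.reachable (by simp [attachH₃Tree, edge_adj])).trans (hinl y)
    · exact (Adj.reachable (by simp [attachH₃Tree, edge_adj])).trans (hinl z)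
  exact (connected_iff_exists_forall_reachable _).2 ⟨.inl x, fun a => (hx a).symm⟩

lemma isTree_attachH₃Tree {T : SimpleGraph V} (hT : T.IsTree) (x y z : V) :
    (attachH₃Tree T x y z).IsTree :=
  ⟨connected_attachH₃Tree hT.connected x y z, isAcyclic_attachH₃Tree hT.isAcyclic x y z⟩

def h₃Cotree : SimpleGraph (Fin 5) := fromEdgeSet {s(0, 3), s(0, 4), s(1, 3), s(1, 4)}

lemma sdiff_attachH₃Tree (G T : SimpleGraph V) (x y z : V) :
    attachH₃ G x y z \ attachH₃Tree T x y z = (G \ T) ⊕g h₃Cotree := by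
  ext (u | i) (v | j)
  · simp [attachH₃, attachH₃Tree, edge_adj]
  all_goals simp [attachH₃, attachH₃Tree, edge_adj, h₃Cotree]
  · tauto
  · tauto
  · revert i j
    decide

lemma oddEdgeComponents_h₃Cotree : h₃Cotree.oddEdgeComponents = ∅ := by
  refine oddEdgeComponents_eq_empty_of_reachable 0 ?_ ?_
  · have h30 : h₃Cotree.Reachable 3 0 := Adj.reachable (by simp [h₃Cotree])
    have h40 : h₃Cotree.Reachable 4 0 := Adj.reachable (by simp [h₃Cotree])
    have h10 : h₃Cotree.Reachable 1 0 := (Adj.reachable (by simp [h₃Cotree])).trans h30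
    intro e he w hw
    simp only [h₃Cotree, edgeSet_fromEdgeSet, Set.mem_sdiff, Set.mem_insert_iff,
      Set.mem_singleton_iff] at he
    rcases he with ⟨rfl | rfl | rfl | rfl, -⟩ <;> rcases Sym2.mem_iff.1 hw with rfl | rfl
    all_goals first | exact .rfl | assumption
  · rw [h₃Cotree, edgeSet_fromEdgeSet, Nat.card_eq_card_toFinset]
    decide

end AttachH₃

theorem attachH3_xuong_tree_general {V : Type*} (G T : SimpleGraph V) (hle : T ≤ G) (htree : T.IsTree)
    (x y z : V) :
    ∃ T' : SimpleGraph (V ⊕ Fin 5), T' ≤ attachH₃ G x y z ∧ T'.IsTree ∧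
      xi (attachH₃ G x y z) T' = xi G T := by
  refine ⟨attachH₃Tree T x y z, attachH₃Tree_le hle x y z, isTree_attachH₃Tree htree x y z, ?_⟩
  have : IsEmpty h₃Cotree.oddEdgeComponents := by
    rw [oddEdgeComponents_h₃Cotree]; infer_instance
  rw [xi_eq_card_oddEdgeComponents, xi_eq_card_oddEdgeComponents, sdiff_attachH₃Tree]
  exact Nat.card_congr (oddEdgeComponentsSumEquiv.trans (Equiv.sumEmpty _ _))

/-- let `G` be a connected graph with a spanning tree `T` of Xuong
deficiency `ξ(G,T) ≤ 1`.  If `G'` is obtained from `G` by attaching a copy of `H₃`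
at three distinct vertices of `G`, then `G'` has a spanning tree `T'` with
`ξ(G',T') = ξ(G,T)`. -/
theorem attachH3_xuong_tree {V : Type*} [Fintype V] (G T : SimpleGraph V)
    (hle : T ≤ G) (htree : T.IsTree) (hconn : G.Connected) (hxi : xi G T ≤ 1)
    (x y z : V) (hxy : x ≠ y) (hyz : y ≠ z) (hxz : x ≠ z) :
    ∃ T' : SimpleGraph (V ⊕ Fin 5), T' ≤ attachH₃ G x y z ∧ T'.IsTree ∧
      xi (attachH₃ G x y z) T' = xi G T :=
  attachH3_xuong_tree_general G T hle htree x y z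
end

section
/- If G is a cubic graph, v₁v₂v₃ is a triangle in G, and Π is an embedding of G − v₁v₂ in a surface, then v₁ and v₂ lie on the boundary of a common face of Π; consequently G embeds in the same surface. -/
/-!
At `v₃` the rotation is a cyclic order of its three darts, so the darts towards `v₁` and `v₂`
are consecutive there, and the corner between them lies on a face through both `v₁` and `v₂`.
Inserting the edge `v₁v₂` into that face, i.e. placing its two darts right after the face's
corners at `v₁` and at `v₂`, splits the face in two: edges and faces both grow by one and
components can only merge, so the Euler defect does not grow.
-/

open SimpleGraph

/-- A rotation system (combinatorial embedding into an orientable surface):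
a permutation of the darts whose cycles are exactly the stars at the vertices. -/
structure RotationSystem {V : Type*} (G : SimpleGraph V) where
  rot : Equiv.Perm G.Dart
  fst_rot : ∀ d, (rot d).fst = d.fst
  star_cyc : ∀ d d' : G.Dart, d.fst = d'.fst → rot.SameCycle d d'

/-- The dart-reversal involution as a permutation. -/
def dartSymmPerm {V : Type*} (G : SimpleGraph V) : Equiv.Perm G.Dart :=
  ⟨SimpleGraph.Dart.symm, SimpleGraph.Dart.symm,
    SimpleGraph.Dart.symm_symm, SimpleGraph.Dart.symm_symm⟩

/-- The face-tracing permutation of a rotation system. -/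
def facePerm {V : Type*} {G : SimpleGraph V} (R : RotationSystem G) : Equiv.Perm G.Dart :=
  (dartSymmPerm G).trans R.rot

/-- The number of faces of the embedding determined by a rotation system: the number of
orbits of the face-tracing permutation, plus one face for each isolated vertex. -/
noncomputable def numFaces {V : Type*} {G : SimpleGraph V} (R : RotationSystem G) : ℕ :=
  Nat.card (Quotient (Equiv.Perm.SameCycle.setoid (facePerm R))) +
    Nat.card {v : V // ∀ d : G.Dart, d.fst ≠ v}

/-- Twice the total genus of the embedding: `E + 2c - V - F` (Euler's formula). -/
noncomputable def eulerDefect {V : Type*} {G : SimpleGraph V} (R : RotationSystem G) : ℤ :=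
  (Nat.card G.edgeSet : ℤ) + 2 * Nat.card G.ConnectedComponent
    - Nat.card V - numFaces R

namespace Setoid

variable {α : Type*} [Finite α] {r s : Setoid α}

theorem card_quotient_add_one_le_of_le (hrs : r ≤ s) {x y : α} (hs : s x y) (hr : ¬r x y) :
    Nat.card (Quotient s) + 1 ≤ Nat.card (Quotient r) := by
  let q : Quotient r → Quotient s := Quotient.map' id fun _ _ h => hrs h
  have hq : Function.Surjective q := fun c =>
    Quotient.inductionOn c fun a => ⟨Quotient.mk r a, rfl⟩
  have hq' : ¬Function.Injective q := fun h =>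
    hr (Quotient.exact (h (Quotient.sound hs : q (Quotient.mk r x) = q (Quotient.mk r y))))
  have := Fintype.ofFinite (Quotient r)
  have := Fintype.ofFinite (Quotient s)
  simpa [Nat.card_eq_fintype_card] using Fintype.card_lt_of_surjective_not_injective q hq hq'

theorem card_quotient_le_add_one_of_le (hrs : r ≤ s) {y : α}
    (h : ∀ a b, s a b → r a b ∨ r a y ∨ r b y) :
    Nat.card (Quotient r) ≤ Nat.card (Quotient s) + 1 := by
  classical
  let g : Quotient r → Option (Quotient s) :=
    Quotient.lift (fun a => if r a y then none else some (Quotient.mk s a)) fun a b hab => by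
      by_cases ha : r a y
      · simp [ha, r.trans (r.symm hab) ha]
      · have hb : ¬r b y := fun hb => ha (r.trans hab hb)
        simp [ha, hb, Quotient.sound (hrs hab)]
  have hg : Function.Injective g := by
    rintro ⟨a⟩ ⟨b⟩ hab
    change (if r a y then none else some (Quotient.mk s a)) =
      (if r b y then none else some (Quotient.mk s b)) at hab
    by_cases ha : r a y <;> by_cases hb : r b y <;>
      simp only [ha, hb, if_true, if_false, reduceCtorEq, Option.some.injEq] at hab
    · exact Quotient.sound (r.trans ha (r.symm hb))
    · rcases h a b (Quotient.exact hab) with h' | h' | h'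
      exacts [Quotient.sound h', absurd h' ha, absurd h' hb]
  calc Nat.card (Quotient r) ≤ Nat.card (Option (Quotient s)) :=
      Nat.card_le_card_of_injective g hg
    _ = Nat.card (Quotient s) + 1 := by simp

end Setoid

namespace Equiv.Perm

variable {α : Type*}

noncomputable def numOrbits (π : Perm α) : ℕ := Nat.card (Quotient (SameCycle.setoid π))

theorem numOrbits_add_card_le_numOrbits_extendDomain {β : Type*} [Finite β] {p : β → Prop}
    [DecidablePred p] (π : Perm α) (f : α ≃ Subtype p) :
    π.numOrbits + Nat.card {b // ¬p b} ≤ (π.extendDomain f).numOrbits := by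
  have := Finite.of_equiv _ f.symm
  have hfix : ∀ b : {b // ¬p b}, π.extendDomain f b = b := fun b =>
    extendDomain_apply_not_subtype _ _ b.2
  let g : Quotient (SameCycle.setoid π) → Quotient (SameCycle.setoid (π.extendDomain f)) :=
    Quotient.lift (fun a => Quotient.mk _ (f a : β)) fun _ _ h => Quotient.sound h.extendDomain
  let g' : {b // ¬p b} → Quotient (SameCycle.setoid (π.extendDomain f)) :=
    fun b => Quotient.mk _ b.1
  have hg : Function.Injective (Sum.elim g g') := by
    refine Function.Injective.sumElim (fun a a' => Quotient.inductionOn₂ a a' fun a a' h =>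
      Quotient.sound (sameCycle_extendDomain.1 (Quotient.exact h)))
      (fun b b' h => Subtype.ext ((Quotient.exact h).eq_of_left (hfix b)))
      (fun a b => Quotient.inductionOn a fun a h => b.2 ?_)
    exact (Quotient.exact h).eq_of_right (hfix b) ▸ (f a).2
  rw [numOrbits, numOrbits, ← Nat.card_sum]
  exact Nat.card_le_card_of_injective _ hg

variable [DecidableEq α] {π : Perm α} {x y z w : α}

theorem mul_swap_pow_succ_apply {j : ℕ}
    (h : ∀ i < j, (π ^ (i + 1)) y ≠ x ∧ (π ^ (i + 1)) y ≠ y) :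
    ∀ i ≤ j, ((π * swap x y) ^ (i + 1)) x = (π ^ (i + 1)) y := by
  intro i
  induction i with
  | zero => intro _; simp
  | succ i ih =>
    intro hi
    obtain ⟨hx, hy⟩ := h i (by omega)
    rw [pow_succ', mul_apply, ih (by omega), mul_apply, swap_apply_of_ne_of_ne hx hy,
      ← mul_apply, ← pow_succ']

theorem sameCycle_mul_swap_of_not_sameCycle [Finite α] (h : ¬π.SameCycle x y) :
    (π * swap x y).SameCycle x y := by
  classical
  have hex : ∃ n, (π ^ (n + 1)) y = y :=
    ⟨orderOf π - 1, by rw [Nat.sub_add_cancel (orderOf_pos π), pow_orderOf_eq_one]; rfl⟩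
  have hpath : ∀ i < Nat.find hex, (π ^ (i + 1)) y ≠ x ∧ (π ^ (i + 1)) y ≠ y :=
    fun i hi => ⟨fun hx => h (hx ▸ (SameCycle.refl π y).pow_right).symm, Nat.find_min hex hi⟩
  have hσ := (SameCycle.refl (π * swap x y) x).pow_right (n := Nat.find hex + 1)
  rwa [mul_swap_pow_succ_apply hpath _ le_rfl, Nat.find_spec hex] at hσ

theorem not_sameCycle_mul_swap_of_sameCycle [Finite α] (hxy : x ≠ y) (h : π.SameCycle x y) :
    ¬(π * swap x y).SameCycle x y := by
  classical
  have hex : ∃ n, (π ^ (n + 1)) y = x := by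
    obtain ⟨n, hn, -, hyx⟩ := h.symm.exists_pow_eq''
    exact ⟨n - 1, by rwa [Nat.sub_add_cancel hn]⟩
  set j := Nat.find hex
  have hj : (π ^ (j + 1)) y = x := Nat.find_spec hex
  -- an earlier return of the orbit of `y` to `y` would reach `x` before step `j + 1`
  have hpath : ∀ i < j, (π ^ (i + 1)) y ≠ x ∧ (π ^ (i + 1)) y ≠ y := by
    refine fun i hi => ⟨Nat.find_min hex hi, fun hyi => Nat.find_min hex (m := j - i - 1)
      (by omega) ?_⟩
    calc (π ^ (j - i - 1 + 1)) y = (π ^ (j - i - 1 + 1)) ((π ^ (i + 1)) y) := by rw [hyi]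
      _ = (π ^ (j + 1)) y := by rw [← mul_apply, ← pow_add]; congr 2; omega
      _ = x := hj
  have hper : Function.IsPeriodicPt (π * swap x y) (j + 1) x := by
    rw [Function.IsPeriodicPt, Function.IsFixedPt, ← coe_pow,
      mul_swap_pow_succ_apply hpath j le_rfl, hj]
  intro hσ
  obtain ⟨m, -, hm⟩ := hσ.exists_pow_eq'
  rw [coe_pow, ← hper.iterate_mod_apply, ← coe_pow] at hm
  by_cases h0 : m % (j + 1) = 0
  · rw [h0, pow_zero, one_apply] at hm
    exact hxy hm
  · obtain ⟨i, hi⟩ := Nat.exists_eq_add_one_of_ne_zero h0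
    have hij : i < j := by have := Nat.mod_lt m (show 0 < j + 1 by omega); omega
    rw [hi, mul_swap_pow_succ_apply hpath i hij.le] at hm
    exact (hpath i hij).2 hm

theorem SameCycle.of_mul_swap [Finite α] (h : (π * swap x y).SameCycle z w) :
    π.SameCycle z w ∨ (π.SameCycle z x ∧ π.SameCycle y w) ∨
      (π.SameCycle z y ∧ π.SameCycle x w) := by
  obtain ⟨n, -, rfl⟩ := h.exists_pow_eq'
  clear h
  induction n with
  | zero => exact Or.inl ⟨0, by simp⟩
  | succ n ih =>
    rw [pow_succ', mul_apply, mul_apply]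
    simp only [sameCycle_apply_right]
    generalize ((π * swap x y) ^ n) z = t at ih ⊢
    have := SameCycle.refl π x
    have := SameCycle.refl π y
    rcases eq_or_ne t x with rfl | hx
    · rw [swap_apply_left]; tauto
    rcases eq_or_ne t y with rfl | hy
    · rw [swap_apply_right]; tauto
    rwa [swap_apply_of_ne_of_ne hx hy]

theorem SameCycle.mul_swap_of_not_sameCycle [Finite α] (h : π.SameCycle z w)
    (hxy : ¬π.SameCycle x y) : (π * swap x y).SameCycle z w := by
  have hσ := sameCycle_mul_swap_of_not_sameCycle hxy
  rw [← mul_swap_mul_self x y π] at h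
  rcases h.of_mul_swap with h | ⟨h₁, h₂⟩ | ⟨h₁, h₂⟩
  · exact h
  · exact h₁.trans (hσ.trans h₂)
  · exact h₁.trans (hσ.symm.trans h₂)

theorem SameCycle.of_mul_swap_of_sameCycle [Finite α] (h : (π * swap x y).SameCycle z w)
    (hxy : π.SameCycle x y) : π.SameCycle z w := by
  rcases h.of_mul_swap with h | ⟨h₁, h₂⟩ | ⟨h₁, h₂⟩
  · exact h
  · exact h₁.trans (hxy.trans h₂)
  · exact h₁.trans (hxy.symm.trans h₂)

theorem sameCycle_mul_swap_of_apply_eq_self [Finite α] (hy : π y = y) (hxy : x ≠ y) :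
    (π * swap x y).SameCycle x y :=
  sameCycle_mul_swap_of_not_sameCycle fun h => hxy (h.eq_of_right hy)

theorem SameCycle.mul_swap_of_apply_eq_self [Finite α] (h : π.SameCycle z w) (hy : π y = y)
    (hxy : x ≠ y) : (π * swap x y).SameCycle z w :=
  h.mul_swap_of_not_sameCycle fun h => hxy (h.eq_of_right hy)

theorem numOrbits_add_one_le_numOrbits_mul_swap [Finite α] (hxy : x ≠ y) (h : π.SameCycle x y) :
    π.numOrbits + 1 ≤ (π * swap x y).numOrbits :=
  Setoid.card_quotient_add_one_le_of_le (fun _ _ h' => h'.of_mul_swap_of_sameCycle h) h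
    (not_sameCycle_mul_swap_of_sameCycle hxy h)

theorem numOrbits_le_numOrbits_mul_swap_add_one [Finite α] (π : Perm α) (x y : α) :
    π.numOrbits ≤ (π * swap x y).numOrbits + 1 := by
  by_cases h : π.SameCycle x y
  · rcases eq_or_ne x y with rfl | hxy
    · rw [swap_self, ← one_def, mul_one]
      omega
    · have := numOrbits_add_one_le_numOrbits_mul_swap hxy h
      omega
  · refine Setoid.card_quotient_le_add_one_of_le (y := y)
      (fun _ _ h' => h'.mul_swap_of_not_sameCycle h) fun a b hab => ?_
    rcases hab.of_mul_swap with h' | ⟨-, h'⟩ | ⟨h', -⟩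
    · exact Or.inl h'
    · exact Or.inr (Or.inr h'.symm)
    · exact Or.inr (Or.inl h')

end Equiv.Perm

theorem exists_eq_or_eq_or_eq_of_card_eq_three {α : Type*} (h : Nat.card α = 3) {a b : α}
    (hab : a ≠ b) : ∃ c, ∀ z, z = a ∨ z = b ∨ z = c := by
  have := Nat.finite_of_card_ne_zero (show Nat.card α ≠ 0 by omega)
  have hcompl := Set.ncard_add_ncard_compl ({a, b} : Set α)
  rw [Set.ncard_pair hab, h] at hcompl
  obtain ⟨c, hc⟩ := Set.ncard_eq_one.1 (show ({a, b}ᶜ : Set α).ncard = 1 by omega)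
  refine ⟨c, fun z => ?_⟩
  by_cases hz : z ∈ ({a, b} : Set α)
  · rcases hz with hz | hz
    exacts [Or.inl hz, Or.inr (Or.inl hz)]
  · have hz : z ∈ ({a, b}ᶜ : Set α) := hz
    rw [hc] at hz
    exact Or.inr (Or.inr hz)

namespace SimpleGraph

variable {V : Type*} {G : SimpleGraph V}

instance [Finite V] : Finite G.Dart := Finite.of_injective _ Dart.toProd_injective

def Adj.toDart {u v : V} (huv : G.Adj u v) : G.Dart := ⟨(u, v), huv⟩

theorem Adj.edge_toDart {u v : V} (huv : G.Adj u v) : huv.toDart.edge = s(u, v) := rfl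

theorem Adj.edge_symm_toDart {u v : V} (huv : G.Adj u v) : huv.toDart.symm.edge = s(u, v) :=
  Dart.edge_symm _

theorem Dart.fst_swap_apply [DecidableEq V] {d₁ d₂ : G.Dart} (h : d₁.fst = d₂.fst)
    (d : G.Dart) : (Equiv.swap d₁ d₂ d).fst = d.fst := by
  rw [Equiv.swap_apply_def]
  split_ifs with h₁ h₂
  · rw [h₁, h]
  · rw [h₂, h]
  · rfl

def deleteEdgeDartEquiv (G : SimpleGraph V) (e : Sym2 V) :
    (G.deleteEdges {e}).Dart ≃ {d : G.Dart // d.edge ≠ e} where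
  toFun d := ⟨⟨d.toProd, deleteEdges_le _ d.adj⟩, ((deleteEdges_adj ..).1 d.adj).2⟩
  invFun d := ⟨d.1.toProd, (deleteEdges_adj ..).2 ⟨d.1.adj, d.2⟩⟩
  left_inv _ := rfl
  right_inv _ := rfl

namespace Dart

variable {e : Sym2 V}

def ofDeleteEdge (d : (G.deleteEdges {e}).Dart) : G.Dart := G.deleteEdgeDartEquiv e d

theorem edge_ofDeleteEdge_ne (d : (G.deleteEdges {e}).Dart) : d.ofDeleteEdge.edge ≠ e :=
  (G.deleteEdgeDartEquiv e d).2

theorem ofDeleteEdge_ne_of_edge_eq (d' : (G.deleteEdges {e}).Dart) {d : G.Dart}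
    (hd : d.edge = e) : d'.ofDeleteEdge ≠ d :=
  fun h => d'.edge_ofDeleteEdge_ne (h ▸ hd)

theorem exists_ofDeleteEdge_eq_or_edge_eq (d : G.Dart) :
    (∃ d' : (G.deleteEdges {e}).Dart, d'.ofDeleteEdge = d) ∨ d.edge = e := by
  by_cases hd : d.edge = e
  · exact Or.inr hd
  · exact Or.inl ⟨(G.deleteEdgeDartEquiv e).symm ⟨d, hd⟩,
      congrArg Subtype.val ((G.deleteEdgeDartEquiv e).apply_symm_apply _)⟩

end Dart

section ExtendDomain

variable [DecidableEq V] {e : Sym2 V} (π : Equiv.Perm (G.deleteEdges {e}).Dart)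

theorem extendDomain_ofDeleteEdge (d : (G.deleteEdges {e}).Dart) :
    π.extendDomain (G.deleteEdgeDartEquiv e) d.ofDeleteEdge = (π d).ofDeleteEdge :=
  Equiv.Perm.extendDomain_apply_image _ _ _

theorem extendDomain_apply_of_edge_eq {d : G.Dart} (hd : d.edge = e) :
    π.extendDomain (G.deleteEdgeDartEquiv e) d = d :=
  Equiv.Perm.extendDomain_apply_not_subtype _ _ (not_not.2 hd)

theorem fst_extendDomain_apply (hπ : ∀ d, (π d).fst = d.fst) (d : G.Dart) :
    (π.extendDomain (G.deleteEdgeDartEquiv e) d).fst = d.fst := by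
  obtain ⟨d, rfl⟩ | hd := d.exists_ofDeleteEdge_eq_or_edge_eq (e := e)
  · rw [extendDomain_ofDeleteEdge]
    exact hπ d
  · rw [extendDomain_apply_of_edge_eq π hd]

end ExtendDomain

theorem card_dart_edge_eq {u v : V} (huv : G.Adj u v) :
    Nat.card {d : G.Dart // d.edge = s(u, v)} = 2 := by
  rw [Nat.card_eq_two_iff]
  refine ⟨⟨huv.toDart, rfl⟩, ⟨huv.toDart.symm, Dart.edge_symm _⟩,
    fun h => Dart.symm_ne _ (congrArg Subtype.val h).symm, Set.eq_univ_of_forall ?_⟩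
  rintro ⟨d, hd⟩
  rcases (dart_edge_eq_iff d huv.toDart).1 hd with rfl | rfl <;> simp

theorem card_edgeSet_deleteEdges_add_one [Finite V] {u v : V} (huv : G.Adj u v) :
    Nat.card (G.deleteEdges {s(u, v)}).edgeSet + 1 = Nat.card G.edgeSet := by
  rw [edgeSet_deleteEdges, Nat.card_coe_set_eq, Nat.card_coe_set_eq]
  exact Set.ncard_sdiff_singleton_add_one huv (Set.toFinite _)

theorem forall_dart_fst_ne_iff_of_deleteEdge {u v : V} {a b : (G.deleteEdges {s(u, v)}).Dart}
    (ha : a.fst = u) (hb : b.fst = v) (x : V) :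
    (∀ d : G.Dart, d.fst ≠ x) ↔ ∀ d : (G.deleteEdges {s(u, v)}).Dart, d.fst ≠ x := by
  refine ⟨fun h d => h d.ofDeleteEdge, fun h d => ?_⟩
  obtain ⟨d, rfl⟩ | hd := d.exists_ofDeleteEdge_eq_or_edge_eq (e := s(u, v))
  · exact h d
  · rcases Sym2.eq_iff.1 hd with ⟨hd, -⟩ | ⟨hd, -⟩ <;> rw [hd]
    exacts [ha ▸ h a, hb ▸ h b]

section InsertEdge

variable [DecidableEq V] {u v : V}

theorem swap_mul_extendDomain_dartSymmPerm (d : (G.deleteEdges {s(u, v)}).Dart) {d₀ : G.Dart}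
    (hd₀ : d₀.edge = s(u, v)) (τ : Equiv.Perm G.Dart) :
    Equiv.swap d.ofDeleteEdge d₀ *
        ((dartSymmPerm (G.deleteEdges {s(u, v)})).extendDomain (G.deleteEdgeDartEquiv _) * τ) =
      (dartSymmPerm (G.deleteEdges {s(u, v)})).extendDomain (G.deleteEdgeDartEquiv _) *
        (Equiv.swap d.symm.ofDeleteEdge d₀ * τ) := by
  rw [← mul_assoc, ← mul_assoc, Equiv.mul_swap_eq_swap_mul, extendDomain_ofDeleteEdge,
    extendDomain_apply_of_edge_eq _ hd₀]
  rfl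

variable (huv : G.Adj u v)

/- Right-multiplying by `swap x y` with `y` fixed inserts `y` just after `x` in its cycle;
applied to a rotation this puts the dart `uv` after `a` at `u` and `vu` after `b` at `v`. -/
def insertEdgePerm (π : Equiv.Perm (G.deleteEdges {s(u, v)}).Dart)
    (a b : (G.deleteEdges {s(u, v)}).Dart) : Equiv.Perm G.Dart :=
  π.extendDomain (G.deleteEdgeDartEquiv _) * Equiv.swap a.ofDeleteEdge huv.toDart *
    Equiv.swap b.ofDeleteEdge huv.toDart.symm

variable {π : Equiv.Perm (G.deleteEdges {s(u, v)}).Dart} {a b : (G.deleteEdges {s(u, v)}).Dart}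

theorem extendDomain_mul_swap_apply_symm :
    (π.extendDomain (G.deleteEdgeDartEquiv _) * Equiv.swap a.ofDeleteEdge huv.toDart)
      huv.toDart.symm = huv.toDart.symm := by
  rw [Equiv.Perm.mul_apply, Equiv.swap_apply_of_ne_of_ne
    (a.ofDeleteEdge_ne_of_edge_eq huv.edge_symm_toDart).symm (Dart.symm_ne _),
    extendDomain_apply_of_edge_eq _ huv.edge_symm_toDart]

theorem sameCycle_insertEdgePerm_ofDeleteEdge [Finite V] {z w : (G.deleteEdges {s(u, v)}).Dart}
    (h : π.SameCycle z w) : (insertEdgePerm huv π a b).SameCycle z.ofDeleteEdge w.ofDeleteEdge :=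
  ((h.extendDomain.mul_swap_of_apply_eq_self (extendDomain_apply_of_edge_eq _ huv.edge_toDart)
    (a.ofDeleteEdge_ne_of_edge_eq huv.edge_toDart)).mul_swap_of_apply_eq_self
      (extendDomain_mul_swap_apply_symm huv) (b.ofDeleteEdge_ne_of_edge_eq huv.edge_symm_toDart))

theorem sameCycle_insertEdgePerm_left [Finite V] :
    (insertEdgePerm huv π a b).SameCycle a.ofDeleteEdge huv.toDart :=
  (Equiv.Perm.sameCycle_mul_swap_of_apply_eq_self (extendDomain_apply_of_edge_eq _ huv.edge_toDart)
    (a.ofDeleteEdge_ne_of_edge_eq huv.edge_toDart)).mul_swap_of_apply_eq_self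
      (extendDomain_mul_swap_apply_symm huv) (b.ofDeleteEdge_ne_of_edge_eq huv.edge_symm_toDart)

theorem sameCycle_insertEdgePerm_right [Finite V] :
    (insertEdgePerm huv π a b).SameCycle b.ofDeleteEdge huv.toDart.symm :=
  Equiv.Perm.sameCycle_mul_swap_of_apply_eq_self (extendDomain_mul_swap_apply_symm huv)
    (b.ofDeleteEdge_ne_of_edge_eq huv.edge_symm_toDart)

theorem fst_insertEdgePerm_apply (hπ : ∀ d, (π d).fst = d.fst) (ha : a.fst = u) (hb : b.fst = v)
    (d : G.Dart) : (insertEdgePerm huv π a b d).fst = d.fst := by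
  rw [insertEdgePerm, Equiv.Perm.mul_apply, Equiv.Perm.mul_apply, fst_extendDomain_apply π hπ,
    Dart.fst_swap_apply ha, Dart.fst_swap_apply hb]

theorem dartSymmPerm_eq_extendDomain_mul_swap :
    dartSymmPerm G = (dartSymmPerm (G.deleteEdges {s(u, v)})).extendDomain
      (G.deleteEdgeDartEquiv _) * Equiv.swap huv.toDart huv.toDart.symm := by
  ext1 d
  obtain ⟨d, rfl⟩ | hd := d.exists_ofDeleteEdge_eq_or_edge_eq (e := s(u, v))
  · rw [Equiv.Perm.mul_apply, Equiv.swap_apply_of_ne_of_ne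
      (d.ofDeleteEdge_ne_of_edge_eq huv.edge_toDart)
      (d.ofDeleteEdge_ne_of_edge_eq huv.edge_symm_toDart), extendDomain_ofDeleteEdge]
    rfl
  · rcases (dart_edge_eq_iff d huv.toDart).1 hd with rfl | rfl
    · rw [Equiv.Perm.mul_apply, Equiv.swap_apply_left,
        extendDomain_apply_of_edge_eq _ huv.edge_symm_toDart]
      rfl
    · rw [Equiv.Perm.mul_apply, Equiv.swap_apply_right,
        extendDomain_apply_of_edge_eq _ huv.edge_toDart]
      rfl

theorem insertEdgePerm_mul_dartSymmPerm (R : RotationSystem (G.deleteEdges {s(u, v)})) :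
    insertEdgePerm huv R.rot a b * dartSymmPerm G =
      insertEdgePerm huv (facePerm R) a.symm b.symm * Equiv.swap huv.toDart huv.toDart.symm := by
  rw [dartSymmPerm_eq_extendDomain_mul_swap huv, insertEdgePerm, insertEdgePerm, facePerm,
    ← Equiv.Perm.mul_def, ← Equiv.Perm.extendDomain_mul]
  simp only [mul_assoc]
  rw [swap_mul_extendDomain_dartSymmPerm _ huv.edge_symm_toDart,
    swap_mul_extendDomain_dartSymmPerm _ huv.edge_toDart]

end InsertEdge

end SimpleGraph

namespace RotationSystem

variable {V : Type*} {G : SimpleGraph V}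

theorem facePerm_apply (R : RotationSystem G) (d : G.Dart) : facePerm R d = R.rot d.symm := rfl

theorem exists_sameCycle_facePerm_of_rot_eq (R : RotationSystem G) {d d' : G.Dart}
    (h : R.rot d = d') :
    ∃ f f' : G.Dart, (facePerm R).SameCycle f f' ∧ f.fst = d.snd ∧ f'.fst = d'.snd := by
  refine ⟨d.symm, facePerm R (facePerm R d.symm),
    Equiv.Perm.SameCycle.rfl.apply_right.apply_right, rfl, ?_⟩
  rw [facePerm_apply R d.symm, Dart.symm_symm, h, facePerm_apply]
  exact R.fst_rot d'.symm

theorem exists_sameCycle_facePerm_of_forall_snd (R : RotationSystem G) {w p q r : V}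
    (hp : G.Adj w p) (hq : G.Adj w q) (hpq : p ≠ q)
    (hw : ∀ d : G.Dart, d.fst = w → d.snd = p ∨ d.snd = q ∨ d.snd = r) :
    ∃ d d' : G.Dart, (facePerm R).SameCycle d d' ∧ d.fst = p ∧ d'.fst = q := by
  have hrot (d : G.Dart) (hd : d.fst = w) : (R.rot d).fst = w := (R.fst_rot d).trans hd
  have hne : hp.toDart ≠ hq.toDart := fun h => hpq (congrArg (·.snd) h)
  have hmoves (d d' : G.Dart) (h : d.fst = d'.fst) (hdd' : d ≠ d') : R.rot d ≠ d :=
    fun hd => hdd' ((R.star_cyc d d' h).eq_of_left hd)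
  rcases hw _ (hrot hp.toDart rfl) with h | h | hpr
  · exact (hmoves hp.toDart hq.toDart rfl hne (Dart.ext _ _ (Prod.ext (hrot _ rfl) h))).elim
  · exact R.exists_sameCycle_facePerm_of_rot_eq (d' := hq.toDart)
      (Dart.ext _ _ (Prod.ext (hrot _ rfl) h))
  rcases hw _ (hrot hq.toDart rfl) with h | h | hqr
  · obtain ⟨f, f', hff', hf, hf'⟩ := R.exists_sameCycle_facePerm_of_rot_eq (d' := hp.toDart)
      (Dart.ext _ _ (Prod.ext (hrot _ rfl) h))
    exact ⟨f', f, hff'.symm, hf', hf⟩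
  · exact (hmoves hq.toDart hp.toDart rfl hne.symm (Dart.ext _ _ (Prod.ext (hrot _ rfl) h))).elim
  · exact (hne (R.rot.injective (Dart.ext _ _ (Prod.ext
      ((hrot _ rfl).trans (hrot _ rfl).symm) (hpr.trans hqr.symm))))).elim

section InsertEdge

variable [DecidableEq V] {u v : V} (huv : G.Adj u v) (R : RotationSystem (G.deleteEdges {s(u, v)}))
  {a b : (G.deleteEdges {s(u, v)}).Dart}

theorem sameCycle_insertEdgePerm [Finite V] (ha : a.fst = u) (hb : b.fst = v) (d d' : G.Dart)
    (h : d.fst = d'.fst) : (insertEdgePerm huv R.rot a b).SameCycle d d' := by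
  have anchor (d : G.Dart) : ∃ c : (G.deleteEdges {s(u, v)}).Dart,
      (insertEdgePerm huv R.rot a b).SameCycle d c.ofDeleteEdge ∧ c.fst = d.fst := by
    obtain ⟨c, rfl⟩ | hd := d.exists_ofDeleteEdge_eq_or_edge_eq (e := s(u, v))
    · exact ⟨c, .rfl, rfl⟩
    · rcases (dart_edge_eq_iff d huv.toDart).1 hd with rfl | rfl
      · exact ⟨a, (sameCycle_insertEdgePerm_left huv).symm, ha⟩
      · exact ⟨b, (sameCycle_insertEdgePerm_right huv).symm, hb⟩
  obtain ⟨c, hc, hcd⟩ := anchor d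
  obtain ⟨c', hc', hcd'⟩ := anchor d'
  exact hc.trans ((sameCycle_insertEdgePerm_ofDeleteEdge huv
    (R.star_cyc c c' (by rw [hcd, hcd', h]))).trans hc'.symm)

def insertEdge [Finite V] (ha : a.fst = u) (hb : b.fst = v) : RotationSystem G where
  rot := insertEdgePerm huv R.rot a b
  fst_rot := fst_insertEdgePerm_apply huv R.fst_rot ha hb
  star_cyc := sameCycle_insertEdgePerm huv R ha hb

theorem facePerm_insertEdge [Finite V] (ha : a.fst = u) (hb : b.fst = v) :
    facePerm (R.insertEdge huv ha hb) =
      insertEdgePerm huv (facePerm R) a.symm b.symm * Equiv.swap huv.toDart huv.toDart.symm :=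
  insertEdgePerm_mul_dartSymmPerm huv R

theorem numOrbits_facePerm_insertEdge [Finite V] (ha : a.fst = u) (hb : b.fst = v)
    (hab : (facePerm R).SameCycle a.symm b.symm) :
    (facePerm R).numOrbits + 1 ≤ (facePerm (R.insertEdge huv ha hb)).numOrbits := by
  have hsplit : (insertEdgePerm huv (facePerm R) a.symm b.symm).SameCycle
      huv.toDart huv.toDart.symm :=
    (sameCycle_insertEdgePerm_left huv).symm.trans
      ((sameCycle_insertEdgePerm_ofDeleteEdge huv hab).trans (sameCycle_insertEdgePerm_right huv))
  -- extending adds the two new darts as fixed points, absorbing them into faces loses at most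
  -- two orbits, and the last transposition splits the face that now runs through both
  have h₁ := Equiv.Perm.numOrbits_add_one_le_numOrbits_mul_swap (Dart.symm_ne _).symm hsplit
  have h₂ := Equiv.Perm.numOrbits_le_numOrbits_mul_swap_add_one
    ((facePerm R).extendDomain (G.deleteEdgeDartEquiv _) *
      Equiv.swap a.symm.ofDeleteEdge huv.toDart) b.symm.ofDeleteEdge huv.toDart.symm
  have h₃ := Equiv.Perm.numOrbits_le_numOrbits_mul_swap_add_one
    ((facePerm R).extendDomain (G.deleteEdgeDartEquiv _)) a.symm.ofDeleteEdge huv.toDart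
  have h₄ := (facePerm R).numOrbits_add_card_le_numOrbits_extendDomain
    (G.deleteEdgeDartEquiv s(u, v))
  have h₅ : Nat.card {d : G.Dart // ¬d.edge ≠ s(u, v)} = 2 := by
    simpa only [ne_eq, not_not] using card_dart_edge_eq huv
  rw [facePerm_insertEdge]
  unfold insertEdgePerm at h₁ ⊢
  omega

theorem numFaces_insertEdge [Finite V] (ha : a.fst = u) (hb : b.fst = v)
    (hab : (facePerm R).SameCycle a.symm b.symm) :
    numFaces R + 1 ≤ numFaces (R.insertEdge huv ha hb) := by
  have hiso : Nat.card {x : V // ∀ d : G.Dart, d.fst ≠ x} =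
      Nat.card {x : V // ∀ d : (G.deleteEdges {s(u, v)}).Dart, d.fst ≠ x} :=
    Nat.card_congr (Equiv.subtypeEquivRight (forall_dart_fst_ne_iff_of_deleteEdge ha hb))
  have := R.numOrbits_facePerm_insertEdge huv ha hb hab
  unfold numFaces
  unfold Equiv.Perm.numOrbits at this
  omega

end InsertEdge

theorem exists_eulerDefect_le_of_sameCycle_facePerm [Finite V] {u v : V} (huv : G.Adj u v)
    (R : RotationSystem (G.deleteEdges {s(u, v)})) {d d' : (G.deleteEdges {s(u, v)}).Dart}
    (h : (facePerm R).SameCycle d d') (hd : d.fst = u) (hd' : d'.fst = v) :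
    ∃ R' : RotationSystem G, eulerDefect R' ≤ eulerDefect R := by
  classical
  have hF (c : (G.deleteEdges {s(u, v)}).Dart) : facePerm R (R.rot.symm c).symm = c := by
    rw [facePerm_apply, Dart.symm_symm, Equiv.apply_symm_apply]
  have hfst (c : (G.deleteEdges {s(u, v)}).Dart) : (R.rot.symm c).fst = c.fst := by
    rw [← R.fst_rot, Equiv.apply_symm_apply]
  have hab : (facePerm R).SameCycle (R.rot.symm d).symm (R.rot.symm d').symm := by
    rw [← Equiv.Perm.sameCycle_apply_left, ← Equiv.Perm.sameCycle_apply_right, hF, hF]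
    exact h
  refine ⟨R.insertEdge huv ((hfst d).trans hd) ((hfst d').trans hd'), ?_⟩
  have hfaces := R.numFaces_insertEdge huv ((hfst d).trans hd) ((hfst d').trans hd') hab
  have hE := card_edgeSet_deleteEdges_add_one huv
  have hC := ConnectedComponent.card_le_card_of_le (deleteEdges_le (G := G) {s(u, v)})
  unfold eulerDefect
  omega

end RotationSystem

/-- if `G` is a cubic graph, `v₁v₂v₃` is a triangle in `G`, and `emb` is
an embedding of `G - v₁v₂` in a surface, then `v₁` and `v₂` lie on the boundary of a
common face of `emb`; consequently `G` embeds in the same surface (there is an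
embedding of `G` of no larger genus). -/
theorem cubic_triangle_common_face {V : Type*} [Fintype V] (G : SimpleGraph V)
    (hcubic : ∀ v : V, Nat.card {w : V // G.Adj v w} = 3)
    (v₁ v₂ v₃ : V) (h₁₂ : G.Adj v₁ v₂) (h₂₃ : G.Adj v₂ v₃) (h₁₃ : G.Adj v₁ v₃)
    (emb : RotationSystem (G.deleteEdges {s(v₁, v₂)})) :
    (∃ d d' : (G.deleteEdges {s(v₁, v₂)}).Dart,
        (facePerm emb).SameCycle d d' ∧ d.fst = v₁ ∧ d'.fst = v₂) ∧
      ∃ emb' : RotationSystem G, eulerDefect emb' ≤ eulerDefect emb := by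
  have hH (x : V) (hx : G.Adj v₃ x) : (G.deleteEdges {s(v₁, v₂)}).Adj v₃ x :=
    (deleteEdges_adj ..).2 ⟨hx, by simp [h₁₃.ne', h₂₃.ne']⟩
  obtain ⟨r, hr⟩ := exists_eq_or_eq_or_eq_of_card_eq_three (hcubic v₃)
    (a := ⟨v₁, h₁₃.symm⟩) (b := ⟨v₂, h₂₃.symm⟩) (by simp [h₁₂.ne])
  obtain ⟨d, d', hdd', hd, hd'⟩ := emb.exists_sameCycle_facePerm_of_forall_snd (r := r)
    (hH _ h₁₃.symm) (hH _ h₂₃.symm) h₁₂.ne fun d hd => by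
      simpa [Subtype.ext_iff] using hr ⟨d.snd, hd ▸ deleteEdges_le _ d.adj⟩
  exact ⟨⟨d, d', hdd', hd, hd'⟩,
    RotationSystem.exists_eulerDefect_le_of_sameCycle_facePerm h₁₂ emb hdd' hd hd'⟩
end
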